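/- arXiv:1408.6198 — 3 statements merged into one kernel-verified Lean document; each statement's English description precedes it below -/
import Mathlib

section
/- For the seed π = #_⋯_# over 𝒜 = {0,1}, let q' = ⟨X',t'⟩ and q'' = ⟨X'',t''⟩ be non-final states of S_π with max X' + t' = max X'' + t'' (where max ∅ = 0). For a set X and integer t write X ⊕ t = {x + t : x ∈ X}. Suppose the symmetric difference of X' ⊕ t' and X'' ⊕ t'' is nonempty, let g be its maximum, and assume g ∈ X' ⊕ t' (so g ∉ X'' ⊕ t'') and g > t''. Then, with d = (r+1) − g, reading the word 0^d·1 from q' ends in the final state, while reading 0^d·1 from q'' ends in a non-final state. -/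
variable {A : Type*}

/-- One transition of the subset seed automaton `S_π`: the state `none` is the final sink
state, a state `some (X, t)` is the non-final state `⟨X,t⟩`. -/
def seedStep [DecidableEq A] (one : A) (π : ℕ → Finset A) (s : ℕ) :
    Option (Finset ℕ × ℕ) → A → Option (Finset ℕ × ℕ)
  | none, _ => none
  | some (X, t), a =>
    if a = one then
      if X.sup id + (t + 1) = s then none else some (X, t + 1)
    else
      let Y : Finset ℕ := ((Finset.Icc 1 (t + 1)).filter fun x => a ∈ π x) ∪
        ((X.filter fun x => x + t + 1 ≤ s ∧ a ∈ π (x + t + 1)).image fun x => x + t + 1)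
      if Y.sup id = s then none else some (Y, 0)

/-- Reading a word from a state, applying transitions letter by letter. -/
def seedRead [DecidableEq A] (one : A) (π : ℕ → Finset A) (s : ℕ)
    (q : Option (Finset ℕ × ℕ)) (w : List A) : Option (Finset ℕ × ℕ) :=
  w.foldl (seedStep one π s) q

/-- `π` matches the alignment `w` at the (1-based) position `p`. -/
def seedMatches (one : A) (π : ℕ → Finset A) (s : ℕ) (w : List A) (p : ℕ) : Prop :=
  1 ≤ p ∧ p + s ≤ w.length + 1 ∧
    ∀ i, 1 ≤ i → i ≤ s → w.getD (p + i - 2) one ∈ π i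


/-- The seed `#_⋯_#` (one `#`, then `r` letters `_`, then one `#`) over the alphabet
`𝒜 = {0,1}` modelled by `Bool` with `1 = true` and `0 = false`: position `1` and
position `r+2` carry `# = {1}`, all other positions carry `_ = {0,1}`.
Its span is `s = r+2` and `R_π = {2,…,r+1}`. -/
def hrSeed (r : ℕ) : ℕ → Finset Bool :=
  fun i => if i = 1 ∨ i = r + 2 then {true} else {false, true}

/-!
For `π = #_⋯_#`, what matters about a non-final state `⟨X,t⟩` is the set
`P = X ⊕ t ∪ [1,t]` of lengths of prefixes of `π` that match a suffix of the text read so far;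
`max P = max X + t`. Reading `0` replaces `P` by `(P ⊕ 1) ∩ [1, r+1]` (the prefixes of lengths
`1` and `r + 2` end in `#`, which rejects `0`), and reading `1` reaches the final state iff
`r + 1 ∈ P`. So `0^d·1` reaches the final state iff `r + 1 - d ∈ P`, i.e. for `d = r + 1 - g`
iff `g ∈ X ⊕ t` or `g ≤ t`: true for `q'`, and false for `q''` because `g ∉ X'' ⊕ t''` and
`t'' < g`.
-/

lemma Finset.sup_id_eq_iff_mem {s : Finset ℕ} {n : ℕ} (hn : 0 < n) (hs : s.sup id ≤ n) :
    s.sup id = n ↔ n ∈ s := by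
  refine ⟨fun h => ?_, fun h => le_antisymm hs (Finset.le_sup (f := id) h)⟩
  obtain ⟨m, hm, hmsup⟩ := s.exists_mem_eq_sup
    (Finset.nonempty_iff_ne_empty.mpr fun he => hn.ne' (he ▸ h).symm) id
  rwa [← h, hmsup]

def matchedPrefixes (X : Finset ℕ) (t : ℕ) : Finset ℕ :=
  X.image (· + t) ∪ Finset.Icc 1 t

lemma matchedPrefixes_zero (X : Finset ℕ) : matchedPrefixes X 0 = X := by
  simp [matchedPrefixes]

lemma sup_matchedPrefixes (X : Finset ℕ) (t : ℕ) :
    (matchedPrefixes X t).sup id = X.sup id + t := by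
  refine le_antisymm (Finset.sup_le fun p hp => ?_) ?_
  · simp only [matchedPrefixes, Finset.mem_union, Finset.mem_image, Finset.mem_Icc] at hp
    rcases hp with ⟨x, hx, rfl⟩ | ⟨-, hpt⟩
    · exact Nat.add_le_add_right (Finset.le_sup (f := id) hx) t
    · exact le_add_left hpt
  · rcases X.eq_empty_or_nonempty with rfl | hX
    · rw [Finset.sup_empty, Nat.bot_eq_zero, zero_add]
      rcases Nat.eq_zero_or_pos t with rfl | ht
      · simp
      · exact Finset.le_sup (f := id)
          (Finset.mem_union_right _ (Finset.mem_Icc.mpr ⟨ht, le_rfl⟩))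
    · obtain ⟨x, hx, hsup⟩ := X.exists_mem_eq_sup hX id
      rw [hsup]
      exact Finset.le_sup (f := id) (Finset.mem_union_left _ (Finset.mem_image_of_mem _ hx))

lemma false_mem_hrSeed_iff (r i : ℕ) : false ∈ hrSeed r i ↔ i ≠ 1 ∧ i ≠ r + 2 := by
  unfold hrSeed
  split_ifs <;> simp <;> omega

lemma seedStep_hrSeed_false {r : ℕ} {X : Finset ℕ} {t : ℕ} (hX : 0 ∉ X) (ht : t ≤ r + 1) :
    seedStep true (hrSeed r) (r + 2) (some (X, t)) false =
      some (((matchedPrefixes X t).image (· + 1)).filter (· ≤ r + 1), 0) := by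
  have hY : ((Finset.Icc 1 (t + 1)).filter fun x => false ∈ hrSeed r x) ∪
      ((X.filter fun x => x + t + 1 ≤ r + 2 ∧ false ∈ hrSeed r (x + t + 1)).image
        fun x => x + t + 1) = ((matchedPrefixes X t).image (· + 1)).filter (· ≤ r + 1) := by
    ext y
    simp only [matchedPrefixes, false_mem_hrSeed_iff, Finset.mem_union, Finset.mem_filter,
      Finset.mem_image, Finset.mem_Icc]
    constructor
    · rintro (⟨⟨h1, h2⟩, h3⟩ | ⟨x, ⟨hx, hle, hne⟩, rfl⟩)
      · exact ⟨⟨y - 1, Or.inr ⟨by omega, by omega⟩, by omega⟩, by omega⟩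
      · exact ⟨⟨x + t, Or.inl ⟨x, hx, rfl⟩, by omega⟩, by omega⟩
    · rintro ⟨⟨p, ⟨x, hx, rfl⟩ | ⟨h1, h2⟩, rfl⟩, hle⟩
      · have : x ≠ 0 := fun h => hX (h ▸ hx)
        exact Or.inr ⟨x, ⟨hx, by omega, by omega, by omega⟩, by omega⟩
      · exact Or.inl ⟨⟨by omega, by omega⟩, by omega, by omega⟩
  have hsup : (((matchedPrefixes X t).image (· + 1)).filter (· ≤ r + 1)).sup id ≤ r + 1 :=
    Finset.sup_le fun y hy => (Finset.mem_filter.mp hy).2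
  simp only [seedStep, Bool.false_eq_true, if_false, hY]
  exact if_neg (by omega)

lemma seedStep_hrSeed_true_eq_none_iff {r : ℕ} {X : Finset ℕ} {t : ℕ}
    (hb : X.sup id + t ≤ r + 1) :
    seedStep true (hrSeed r) (r + 2) (some (X, t)) true = none ↔
      r + 1 ∈ matchedPrefixes X t := by
  rw [← sup_matchedPrefixes] at hb
  rw [← Finset.sup_id_eq_iff_mem r.succ_pos hb, sup_matchedPrefixes]
  simp only [seedStep, if_true]
  split_ifs <;> simp <;> omega

theorem seedRead_hrSeed_replicate_false_append_true_eq_none_iff {r : ℕ} (d : ℕ)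
    {X : Finset ℕ} {t : ℕ} (hX : 0 ∉ X) (hb : X.sup id + t ≤ r + 1) :
    seedRead true (hrSeed r) (r + 2) (some (X, t)) (List.replicate d false ++ [true]) = none ↔
      ∃ p ∈ matchedPrefixes X t, p + d = r + 1 := by
  induction d generalizing X t with
  | zero => simpa [seedRead] using seedStep_hrSeed_true_eq_none_iff hb
  | succ d ih =>
    set Y := ((matchedPrefixes X t).image (· + 1)).filter (· ≤ r + 1)
    have hY : 0 ∉ Y := by simp [Y]
    have hYb : Y.sup id + 0 ≤ r + 1 := Finset.sup_le fun y hy => (Finset.mem_filter.mp hy).2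
    have hread : seedRead true (hrSeed r) (r + 2) (some (X, t))
        (List.replicate (d + 1) false ++ [true]) =
        seedRead true (hrSeed r) (r + 2) (some (Y, 0)) (List.replicate d false ++ [true]) := by
      rw [← seedStep_hrSeed_false hX (by omega)]
      rfl
    rw [hread, ih hY hYb, matchedPrefixes_zero]
    simp only [Y, Finset.mem_filter, Finset.mem_image]
    constructor
    · rintro ⟨_, ⟨⟨p, hp, rfl⟩, -⟩, hpd⟩
      exact ⟨p, hp, by omega⟩
    · rintro ⟨p, hp, hpd⟩
      exact ⟨p + 1, ⟨⟨p, hp, rfl⟩, by omega⟩, by omega⟩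

theorem stmt_9_general (r : ℕ) (X' X'' : Finset ℕ) (t' t'' : ℕ)
    (hX' : X' ⊆ Finset.Icc 2 (r + 1)) (hb' : X'.sup id + t' ≤ r + 1)
    (hX'' : X'' ⊆ Finset.Icc 2 (r + 1)) (hb'' : X''.sup id + t'' ≤ r + 1)
    (g : ℕ)
    (hgmem : g ∈ symmDiff (X'.image fun x => x + t') (X''.image fun x => x + t''))
    (hgin : g ∈ X'.image fun x => x + t')
    (hgt : t'' < g) :
    seedRead true (hrSeed r) (r + 2) (some (X', t'))
        (List.replicate ((r + 1) - g) false ++ [true]) = none ∧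
      seedRead true (hrSeed r) (r + 2) (some (X'', t''))
        (List.replicate ((r + 1) - g) false ++ [true]) ≠ none := by
  have zero_not_mem {X : Finset ℕ} (hX : X ⊆ Finset.Icc 2 (r + 1)) : 0 ∉ X :=
    fun h => by simpa using hX h
  have hgnot : g ∉ X''.image fun x => x + t'' :=
    ((Finset.mem_symmDiff.mp hgmem).resolve_right fun h => h.2 hgin).2
  obtain ⟨x, hx, rfl⟩ := Finset.mem_image.mp hgin
  have hxsup : x ≤ X'.sup id := Finset.le_sup (f := id) hx
  refine ⟨(seedRead_hrSeed_replicate_false_append_true_eq_none_iff _ (zero_not_mem hX') hb').mpr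
    ⟨x + t', Finset.mem_union_left _ (Finset.mem_image_of_mem _ hx), by omega⟩, ?_⟩
  rw [Ne, seedRead_hrSeed_replicate_false_append_true_eq_none_iff _ (zero_not_mem hX'') hb'']
  rintro ⟨p, hp, hpd⟩
  obtain rfl : p = x + t' := by omega
  rcases Finset.mem_union.mp hp with hp | hp
  · exact hgnot hp
  · exact absurd (Finset.mem_Icc.mp hp).2 (not_le.mpr hgt)

/-- For the seed `π = #_⋯_#` over `{0,1}`, let `⟨X',t'⟩`, `⟨X'',t''⟩` be non-final states
with `max X' + t' = max X'' + t''`.  Suppose the symmetric difference of `X' ⊕ t'` and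
`X'' ⊕ t''` is nonempty, `g` is its maximum, `g ∈ X' ⊕ t'` and `g > t''`.  Then, with
`d = (r+1) - g`, reading `0^d·1` from `⟨X',t'⟩` ends in the final state while reading
`0^d·1` from `⟨X'',t''⟩` does not. -/
theorem stmt_9 (r : ℕ) (X' X'' : Finset ℕ) (t' t'' : ℕ)
    (hX' : X' ⊆ Finset.Icc 2 (r + 1)) (hb' : X'.sup id + t' ≤ r + 1)
    (hX'' : X'' ⊆ Finset.Icc 2 (r + 1)) (hb'' : X''.sup id + t'' ≤ r + 1)
    (heq : X'.sup id + t' = X''.sup id + t'')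
    (g : ℕ)
    (hgmem : g ∈ symmDiff (X'.image fun x => x + t') (X''.image fun x => x + t''))
    (hgmax : ∀ v ∈ symmDiff (X'.image fun x => x + t') (X''.image fun x => x + t''),
      v ≤ g)
    (hgin : g ∈ X'.image fun x => x + t')
    (hgt : t'' < g) :
    seedRead true (hrSeed r) (r + 2) (some (X', t'))
        (List.replicate ((r + 1) - g) false ++ [true]) = none ∧
      seedRead true (hrSeed r) (r + 2) (some (X'', t''))
        (List.replicate ((r + 1) - g) false ++ [true]) ≠ none :=
  stmt_9_general r X' X'' t' t'' hX' hb' hX'' hb'' g hgmem hgin hgt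
end

section
/- The map f that sends each non-final state A ∈ Q_AC of the Aho–Corasick automaton of π to the state of S_π reached by reading the word A from the initial state of S_π, and sends the Aho–Corasick final state to the final state of S_π, is a surjection from the states of the Aho–Corasick automaton onto the set of states of S_π reachable from its initial state. -/
variable {A : Type*}

/-!
A state `⟨X, t⟩` of `S_π` reached on a word `W` only remembers the last `max X + t` letters
of `W`: truncating a state to what the last `l` letters can witness commutes with the
transitions, so reading the suffix `B` of `W` of length `max X + t` already leads to `⟨X, t⟩`.
Since the state is not final, `|B| < s`; and `B` is compatible with `π` letter by letter,
as certified by `x = max X ∈ X` (or, when `X = ∅`, because `B` consists of `t` ones).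
Hence `B` is a non-final Aho–Corasick state mapped to `⟨X, t⟩`.
-/

def MatchesPrefix (π : ℕ → Finset A) (B : List A) : Prop :=
  ∀ i (h : i < B.length), B.get ⟨i, h⟩ ∈ π (i + 1)

lemma MatchesPrefix.concat {π : ℕ → Finset A} {B : List A} {a : A} (hB : MatchesPrefix π B)
    (ha : a ∈ π (B.length + 1)) : MatchesPrefix π (B ++ [a]) := by
  intro i hi
  simp only [List.length_append, List.length_singleton] at hi
  simp only [List.get_eq_getElem]
  rcases Nat.lt_or_ge i B.length with hlt | hge
  · rw [List.getElem_append_left hlt]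
    exact hB i hlt
  · obtain rfl : i = B.length := by omega
    simpa using ha

lemma matchesPrefix_replicate {one : A} {π : ℕ → Finset A} {n : ℕ}
    (hone : ∀ i, 1 ≤ i → i ≤ n → one ∈ π i) :
    MatchesPrefix π (List.replicate n one) := by
  intro i hi
  simp only [List.length_replicate] at hi
  simpa using hone (i + 1) (by omega) (by omega)

/-- The state `⟨X, t⟩` restricted to what the last `l` letters of the input can witness. -/
def truncState (l : ℕ) (X : Finset ℕ) (t : ℕ) : Finset ℕ × ℕ :=
  (X.filter (· + t ≤ l), min l t)

lemma truncState_sup_add_self (X : Finset ℕ) (t : ℕ) :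
    truncState (X.sup id + t) X t = (X, t) := by
  have hX : ∀ x ∈ X, x + t ≤ X.sup id + t := fun x hx =>
    Nat.add_le_add_right (Finset.le_sup (f := id) hx) t
  rw [truncState, Finset.filter_true_of_mem hX, min_eq_right (Nat.le_add_left t _)]

lemma sup_truncState_add_le (l : ℕ) (X : Finset ℕ) (t : ℕ) :
    (truncState l X t).1.sup id + (truncState l X t).2 ≤ l := by
  simp only [truncState]
  rcases le_or_gt t l with htl | hlt
  · have : (X.filter (· + t ≤ l)).sup id ≤ l - t :=
      Finset.sup_le fun x hx => by simp only [Finset.mem_filter] at hx; simp only [id]; omega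
    omega
  · have : X.filter (· + t ≤ l) = ∅ := Finset.filter_false_of_mem fun x _ => by omega
    simp only [this, Finset.sup_empty, Nat.bot_eq_zero]
    omega

lemma List.length_rtake_of_le {l : List A} {n : ℕ} (h : n ≤ l.length) :
    (l.rtake n).length = n := by
  simp only [List.rtake, List.length_drop]
  omega

section Automaton

variable [DecidableEq A]

/-- The set `X_U ∪ X_V` computed by `seedStep` on a letter `a ≠ one`. -/
def seedUpdate (π : ℕ → Finset A) (s : ℕ) (X : Finset ℕ) (t : ℕ) (a : A) : Finset ℕ :=
  ((Finset.Icc 1 (t + 1)).filter fun x => a ∈ π x) ∪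
    ((X.filter fun x => x + t + 1 ≤ s ∧ a ∈ π (x + t + 1)).image fun x => x + t + 1)

section Update

variable {π : ℕ → Finset A} {s : ℕ} {X : Finset ℕ} {t : ℕ} {a : A} {y : ℕ}

lemma mem_seedUpdate :
    y ∈ seedUpdate π s X t a ↔
      (1 ≤ y ∧ y ≤ t + 1 ∧ a ∈ π y) ∨
        ∃ x ∈ X, x + t + 1 ≤ s ∧ a ∈ π (x + t + 1) ∧ x + t + 1 = y := by
  simp only [seedUpdate, Finset.mem_union, Finset.mem_filter, Finset.mem_Icc, Finset.mem_image]
  tauto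

lemma le_of_mem_seedUpdate (hy : y ∈ seedUpdate π s X t a) :
    1 ≤ y ∧ y ≤ X.sup id + t + 1 := by
  rcases mem_seedUpdate.1 hy with ⟨h1, h2, -⟩ | ⟨x, hx, -, -, rfl⟩
  · omega
  · have : x ≤ X.sup id := Finset.le_sup (f := id) hx
    omega

end Update

variable (one : A) (π : ℕ → Finset A) (s : ℕ)

lemma seedRead_concat (q : Option (Finset ℕ × ℕ)) (W : List A) (a : A) :
    seedRead one π s q (W ++ [a]) = seedStep one π s (seedRead one π s q W) a := by
  simp [seedRead]

lemma seedStep_one (X : Finset ℕ) (t : ℕ) :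
    seedStep one π s (some (X, t)) one =
      if X.sup id + (t + 1) = s then none else some (X, t + 1) := by
  simp [seedStep]

lemma seedStep_of_ne {a : A} (ha : a ≠ one) (X : Finset ℕ) (t : ℕ) :
    seedStep one π s (some (X, t)) a =
      if (seedUpdate π s X t a).sup id = s then none else some (seedUpdate π s X t a, 0) := by
  simp [seedStep, seedUpdate, ha]

lemma seedStep_truncState_one {X : Finset ℕ} {t k : ℕ} (hk : k + 1 < s) :
    seedStep one π s (some (truncState k X t)) one = some (truncState (k + 1) X (t + 1)) := by
  have hsup := sup_truncState_add_le k X t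
  simp only [truncState] at hsup ⊢
  rw [seedStep_one, if_neg (by omega), show min k t + 1 = min (k + 1) (t + 1) by omega,
    Finset.filter_congr fun x _ => (by omega : x + t ≤ k ↔ x + (t + 1) ≤ k + 1)]

lemma seedUpdate_truncState {X : Finset ℕ} {t : ℕ} (k : ℕ) (a : A) :
    seedUpdate π s (truncState k X t).1 (truncState k X t).2 a =
      (seedUpdate π s X t a).filter (· ≤ k + 1) := by
  ext y
  simp only [truncState, Finset.mem_filter, mem_seedUpdate]
  constructor
  · rintro (⟨h1, h2, ha⟩ | ⟨x, ⟨hx, hxk⟩, hxs, ha, rfl⟩)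
    · exact ⟨Or.inl ⟨h1, by omega, ha⟩, by omega⟩
    · rw [min_eq_right (by omega)] at hxs ha ⊢
      exact ⟨Or.inr ⟨x, hx, hxs, ha, rfl⟩, by omega⟩
  · rintro ⟨⟨h1, h2, ha⟩ | ⟨x, hx, hxs, ha, rfl⟩, hyk⟩
    · exact Or.inl ⟨h1, by omega, ha⟩
    · rw [min_eq_right (show t ≤ k by omega)]
      exact Or.inr ⟨x, ⟨hx, by omega⟩, hxs, ha, rfl⟩

lemma seedStep_truncState_of_ne {a : A} (ha : a ≠ one) {X : Finset ℕ} {t k : ℕ}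
    (hk : k + 1 < s) :
    seedStep one π s (some (truncState k X t)) a =
      some (truncState (k + 1) (seedUpdate π s X t a) 0) := by
  have hsup : ((seedUpdate π s X t a).filter (· ≤ k + 1)).sup id ≤ k + 1 :=
    Finset.sup_le fun y hy => by simp only [Finset.mem_filter] at hy; exact hy.2
  rw [seedStep_of_ne one π s ha, seedUpdate_truncState, if_neg (by omega)]
  simp [truncState]

/-- What a state `⟨X, t⟩` reached on input `W` remembers about `W`. The last field is the
heart of the argument: the same state is reached from the suffix of length `max X + t`. -/
structure SeedInv (W : List A) (X : Finset ℕ) (t : ℕ) : Prop where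
  rtake_eq_replicate : ∀ l ≤ t, W.rtake l = List.replicate l one
  sup_add_le_length : X.sup id + t ≤ W.length
  sup_add_lt : X.sup id + t < s
  matchesPrefix_rtake : ∀ x ∈ X, MatchesPrefix π (W.rtake (x + t))
  seedRead_rtake : ∀ l ≤ X.sup id + t,
    seedRead one π s (some (∅, 0)) (W.rtake l) = some (truncState l X t)

variable {one π s}

lemma seedInv_nil (hs : 1 ≤ s) : SeedInv one π s [] ∅ 0 where
  rtake_eq_replicate l hl := by simp [Nat.le_zero.1 hl]
  sup_add_le_length := by simp
  sup_add_lt := by simp; omega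
  matchesPrefix_rtake := by simp
  seedRead_rtake l hl := by simp [Nat.le_zero.1 (by simpa using hl), seedRead, truncState]

lemma SeedInv.concat_one (hone : ∀ i, 1 ≤ i → i ≤ s → one ∈ π i) {W : List A}
    {X : Finset ℕ} {t : ℕ} (h : SeedInv one π s W X t) (hfin : X.sup id + (t + 1) ≠ s) :
    SeedInv one π s (W ++ [one]) X (t + 1) where
  rtake_eq_replicate
    | 0, _ => by simp
    | l + 1, hl => by
      rw [List.rtake_concat_succ, h.rtake_eq_replicate l (by omega), List.replicate_succ']
  sup_add_le_length := by have := h.sup_add_le_length; simp; omega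
  sup_add_lt := by have := h.sup_add_lt; omega
  matchesPrefix_rtake x hx := by
    have hxX : x ≤ X.sup id := Finset.le_sup (f := id) hx
    have := h.sup_add_le_length
    have := h.sup_add_lt
    rw [← add_assoc, List.rtake_concat_succ]
    refine (h.matchesPrefix_rtake x hx).concat ?_
    rw [List.length_rtake_of_le (by omega)]
    exact hone _ (by omega) (by omega)
  seedRead_rtake
    | 0, _ => by
      simp [seedRead, truncState]
    | k + 1, hk => by
      have := h.sup_add_lt
      rw [List.rtake_concat_succ, seedRead_concat, h.seedRead_rtake k (by omega),
        seedStep_truncState_one one π s (by omega)]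

lemma SeedInv.concat_of_ne (hone : ∀ i, 1 ≤ i → i ≤ s → one ∈ π i) {W : List A}
    {X : Finset ℕ} {t : ℕ} {a : A} (h : SeedInv one π s W X t) (ha : a ≠ one)
    (hfin : (seedUpdate π s X t a).sup id ≠ s) :
    SeedInv one π s (W ++ [a]) (seedUpdate π s X t a) 0 := by
  have hlen := h.sup_add_le_length
  have hlt := h.sup_add_lt
  have hsup : (seedUpdate π s X t a).sup id ≤ X.sup id + t + 1 :=
    Finset.sup_le fun y hy => (le_of_mem_seedUpdate hy).2
  refine ⟨fun l hl => by simp [Nat.le_zero.1 hl],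
    by simp only [List.length_append, List.length_singleton, add_zero]; omega, by omega, ?_, ?_⟩
  · intro y hy
    rcases mem_seedUpdate.1 hy with ⟨h1, h2, hay⟩ | ⟨x, hx, -, hax, rfl⟩
    · obtain ⟨k, rfl⟩ : ∃ k, y = k + 1 := ⟨y - 1, by omega⟩
      rw [List.rtake_concat_succ, h.rtake_eq_replicate k (by omega)]
      exact (matchesPrefix_replicate fun i _ _ => hone i (by omega) (by omega)).concat
        (by simpa using hay)
    · have hxX : x ≤ X.sup id := Finset.le_sup (f := id) hx
      rw [add_zero, List.rtake_concat_succ]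
      refine (h.matchesPrefix_rtake x hx).concat ?_
      rwa [List.length_rtake_of_le (by omega)]
  · rintro (_ | k) hk
    · have : (seedUpdate π s X t a).filter (· + 0 ≤ 0) = ∅ :=
        Finset.filter_false_of_mem fun y hy => by have := (le_of_mem_seedUpdate hy).1; omega
      simp only [truncState, this, List.rtake_zero]
      rfl
    · rw [List.rtake_concat_succ, seedRead_concat, h.seedRead_rtake k (by omega),
        seedStep_truncState_of_ne one π s ha (by omega)]

lemma seedInv_of_seedRead (hs : 1 ≤ s) (hone : ∀ i, 1 ≤ i → i ≤ s → one ∈ π i) :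
    ∀ (W : List A) {X : Finset ℕ} {t : ℕ},
      seedRead one π s (some (∅, 0)) W = some (X, t) → SeedInv one π s W X t := by
  intro W
  induction W using List.reverseRecOn with
  | nil =>
    intro X t hW
    obtain ⟨rfl, rfl⟩ : ∅ = X ∧ 0 = t := by simpa [seedRead] using hW
    exact seedInv_nil hs
  | append_singleton W a ih =>
    intro X t hW
    rw [seedRead_concat] at hW
    rcases hq : seedRead one π s (some (∅, 0)) W with _ | ⟨X', t'⟩
    · simp [hq, seedStep] at hW
    rw [hq] at hW
    by_cases ha : a = one
    · subst ha
      rw [seedStep_one] at hW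
      split_ifs at hW with hfin
      obtain ⟨rfl, rfl⟩ : X' = X ∧ t' + 1 = t := by simpa using hW
      exact (ih hq).concat_one hone hfin
    · rw [seedStep_of_ne one π s ha] at hW
      split_ifs at hW with hfin
      obtain ⟨rfl, rfl⟩ : seedUpdate π s X' t' a = X ∧ 0 = t := by simpa using hW
      exact (ih hq).concat_of_ne hone ha hfin

lemma SeedInv.matchesPrefix_rtake_sup_add (hone : ∀ i, 1 ≤ i → i ≤ s → one ∈ π i)
    {W : List A} {X : Finset ℕ} {t : ℕ} (h : SeedInv one π s W X t) :
    MatchesPrefix π (W.rtake (X.sup id + t)) := by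
  rcases X.eq_empty_or_nonempty with rfl | hne
  · have := h.sup_add_lt
    rw [Finset.sup_empty, Nat.bot_eq_zero, zero_add, h.rtake_eq_replicate t le_rfl]
    exact matchesPrefix_replicate fun i hi hit => hone i hi (by simp at this; omega)
  · obtain ⟨x, hx, hsup⟩ := X.exists_mem_eq_sup hne id
    rw [hsup]
    exact h.matchesPrefix_rtake x hx

end Automaton

/-- The map sending each non-final Aho–Corasick state `B` (a word of length `< s` matched
by the corresponding prefix of `π`) to the state of `S_π` reached by reading `B` from the
initial state, and sending the Aho–Corasick final state (`none`) to the final state of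
`S_π`, is a surjection onto the set of states of `S_π` reachable from its initial state. -/
theorem stmt_10 [DecidableEq A] (one : A) (π : ℕ → Finset A) (s : ℕ)
    (hs : 1 ≤ s) (hone : ∀ i, 1 ≤ i → i ≤ s → one ∈ π i) :
    Set.SurjOn
      (fun oB : Option (List A) =>
        match oB with
        | none => (none : Option (Finset ℕ × ℕ))
        | some B => seedRead one π s (some (∅, 0)) B)
      ({none} ∪ Option.some '' {B : List A | B.length < s ∧
          ∀ i (h : i < B.length), B.get ⟨i, h⟩ ∈ π (i + 1)})
      {q | ∃ W : List A, seedRead one π s (some (∅, 0)) W = q} := by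
  rintro q ⟨W, hW⟩
  rcases q with _ | ⟨X, t⟩
  · exact ⟨none, Or.inl rfl, rfl⟩
  have h := seedInv_of_seedRead hs hone W hW
  refine ⟨some (W.rtake (X.sup id + t)),
    Or.inr ⟨_, ⟨?_, h.matchesPrefix_rtake_sup_add hone⟩, rfl⟩, ?_⟩
  · rw [List.length_rtake_of_le h.sup_add_le_length]
    exact h.sup_add_lt
  · simpa [truncState_sup_add_self] using h.seedRead_rtake _ le_rfl
end

section
/- If reading a word a_1⋯a_p ∈ 𝒜^* from the initial state of S_π ends in the final state while reading its prefix a_1⋯a_{p−1} ends in a non-final state (i.e., the automaton enters the final state for the first time after reading a_p), then p ≥ s and π matches a_1⋯a_p at position p − s + 1, i.e., π matches a suffix of a_1⋯a_p. -/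
variable {A : Type*}

/-!
Every non-final state `⟨X,t⟩` reached on a word `u` carries a certificate: the last `t` letters
of `u` are `1`, and for each `x ∈ X` the prefix `π_1⋯π_{x+t}` matches the suffix of `u` of length
`x + t` (the first `x` letters were checked against `π`, the trailing `1`s match any seed letter).
Both kinds of transition preserve this, and a transition into the final state is exactly one
that completes a match of length `s`.
-/

lemma Finset.sup_id_mem_of_ne_zero {X : Finset ℕ} (h : X.sup id ≠ 0) : X.sup id ∈ X := by
  obtain ⟨x, hx, hsup⟩ := X.exists_mem_eq_sup (Finset.nonempty_iff_ne_empty.mpr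
    fun hX => h (by rw [hX, Finset.sup_empty, Nat.bot_eq_zero])) id
  rwa [hsup]

section Matches

variable (one : A) (π : ℕ → Finset A)

lemma seedMatches_append_singleton {n : ℕ} {u : List A} {a : A}
    (h : seedMatches one π n u (u.length - n + 1)) (ha : a ∈ π (n + 1)) :
    seedMatches one π (n + 1) (u ++ [a]) ((u ++ [a]).length - (n + 1) + 1) := by
  unfold seedMatches at h ⊢
  obtain ⟨-, hn, hmem⟩ := h
  simp only [List.length_append, List.length_singleton] at hn ⊢
  refine ⟨by omega, by omega, fun i hi₁ hi₂ => ?_⟩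
  rcases Nat.lt_or_ge i (n + 1) with hi | hi
  · rw [List.getD_append _ _ _ _ (by omega)]
    convert hmem i hi₁ (by omega) using 2
    omega
  · rw [List.getD_append_right _ _ _ _ (by omega)]
    obtain rfl : i = n + 1 := by omega
    convert ha
    simp [show u.length - n + 1 + (n + 1) - 2 - u.length = 0 by omega]

lemma seedMatches_of_replicate_suffix {n t : ℕ} {u : List A}
    (h : List.replicate t one <:+ u) (hnt : n ≤ t)
    (hone : ∀ i, 1 ≤ i → i ≤ n → one ∈ π i) :
    seedMatches one π n u (u.length - n + 1) := by
  obtain ⟨l, rfl⟩ := h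
  unfold seedMatches
  simp only [List.length_append, List.length_replicate]
  refine ⟨by omega, by omega, fun i hi₁ hi₂ => ?_⟩
  rw [List.getD_append_right _ _ _ _ (by omega), List.getD_replicate _ (by omega)]
  exact hone i hi₁ hi₂

end Matches

section Automaton

variable [DecidableEq A]

/-- The set `X_U ∪ X_V` of the transition on a letter `a ≠ 1`. -/
def seedNext (π : ℕ → Finset A) (s : ℕ) (X : Finset ℕ) (t : ℕ) (a : A) : Finset ℕ :=
  ((Finset.Icc 1 (t + 1)).filter fun x => a ∈ π x) ∪
    ((X.filter fun x => x + t + 1 ≤ s ∧ a ∈ π (x + t + 1)).image fun x => x + t + 1)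

lemma seedStep_some (one : A) (π : ℕ → Finset A) (s : ℕ) (X : Finset ℕ) (t : ℕ) (a : A) :
    seedStep one π s (some (X, t)) a =
      if a = one then (if X.sup id + (t + 1) = s then none else some (X, t + 1))
      else if (seedNext π s X t a).sup id = s then none else some (seedNext π s X t a, 0) :=
  rfl

lemma seedRead_append_singleton (one : A) (π : ℕ → Finset A) (s : ℕ)
    (q : Option (Finset ℕ × ℕ)) (u : List A) (a : A) :
    seedRead one π s q (u ++ [a]) = seedStep one π s (seedRead one π s q u) a :=
  List.foldl_concat _ _ _ _

end Automaton

structure SeedInvariant (one : A) (π : ℕ → Finset A) (s : ℕ) (u : List A) (X : Finset ℕ)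
    (t : ℕ) : Prop where
  sup_add_lt : X.sup id + t < s
  replicate_suffix : List.replicate t one <:+ u
  matches_of_mem : ∀ x ∈ X, seedMatches one π (x + t) u (u.length - (x + t) + 1)

namespace SeedInvariant

variable {one : A} {π : ℕ → Finset A} {s : ℕ} {u : List A} {X : Finset ℕ} {t : ℕ}

lemma init (hs : 1 ≤ s) : SeedInvariant one π s [] ∅ 0 :=
  ⟨by simpa using Nat.succ_le_iff.mp hs, List.nil_suffix, by simp⟩

variable (hone : ∀ i, 1 ≤ i → i ≤ s → one ∈ π i)
include hone

lemma matches_sup_add (h : SeedInvariant one π s u X t) :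
    seedMatches one π (X.sup id + t) u (u.length - (X.sup id + t) + 1) := by
  by_cases hX : X.sup id = 0
  · rw [hX, zero_add]
    exact seedMatches_of_replicate_suffix one π h.replicate_suffix le_rfl
      fun i hi₁ hi₂ => hone i hi₁ (by have := h.sup_add_lt; omega)
  · exact h.matches_of_mem _ (Finset.sup_id_mem_of_ne_zero hX)

lemma append_one (h : SeedInvariant one π s u X t) (hne : X.sup id + (t + 1) ≠ s) :
    SeedInvariant one π s (u ++ [one]) X (t + 1) := by
  refine ⟨by have := h.sup_add_lt; omega, ?_, fun x hx => ?_⟩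
  · obtain ⟨l, hl⟩ := h.replicate_suffix
    exact ⟨l, by rw [List.replicate_succ', ← List.append_assoc, hl]⟩
  · have hxs : x + t + 1 ≤ s := by
      have : x ≤ X.sup id := Finset.le_sup (f := id) hx
      have := h.sup_add_lt
      omega
    rw [← add_assoc]
    exact seedMatches_append_singleton one π (h.matches_of_mem x hx) (hone _ (by omega) hxs)

variable [DecidableEq A]

lemma matches_of_mem_seedNext (h : SeedInvariant one π s u X t) {a : A} {y : ℕ}
    (hy : y ∈ seedNext π s X t a) :
    y ≤ s ∧ seedMatches one π y (u ++ [a]) ((u ++ [a]).length - y + 1) := by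
  simp only [seedNext, Finset.mem_union, Finset.mem_filter, Finset.mem_Icc,
    Finset.mem_image] at hy
  rcases hy with ⟨⟨hy₁, hyt⟩, hya⟩ | ⟨x, ⟨hx, hxs, hxa⟩, rfl⟩
  · have hys : y ≤ s := by have := h.sup_add_lt; omega
    obtain ⟨y, rfl⟩ : ∃ k, y = k + 1 := ⟨y - 1, by omega⟩
    -- the `t ≥ y` letters before `a` are all `1`, so they match `π_1⋯π_y`
    exact ⟨hys, seedMatches_append_singleton one π
      (seedMatches_of_replicate_suffix one π h.replicate_suffix (by omega)
        fun i hi₁ hi₂ => hone i hi₁ (by omega)) hya⟩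
  · exact ⟨hxs, seedMatches_append_singleton one π (h.matches_of_mem x hx) hxa⟩

lemma append_seedNext (h : SeedInvariant one π s u X t) {a : A}
    (hne : (seedNext π s X t a).sup id ≠ s) :
    SeedInvariant one π s (u ++ [a]) (seedNext π s X t a) 0 := by
  have hle : (seedNext π s X t a).sup id ≤ s :=
    Finset.sup_le fun y hy => (h.matches_of_mem_seedNext hone hy).1
  exact ⟨by omega, List.nil_suffix, fun y hy => (h.matches_of_mem_seedNext hone hy).2⟩

lemma of_seedRead (hs : 1 ≤ s) {u : List A} :
    ∀ {X t}, seedRead one π s (some (∅, 0)) u = some (X, t) → SeedInvariant one π s u X t := by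
  induction u using List.reverseRecOn with
  | nil =>
    intro X t h
    obtain ⟨rfl, rfl⟩ : ∅ = X ∧ 0 = t := by simpa [seedRead] using h
    exact init hs
  | append_singleton u a ih =>
    intro X t h
    rw [seedRead_append_singleton] at h
    rcases hq : seedRead one π s (some (∅, 0)) u with _ | ⟨X', t'⟩
    · simp [hq, seedStep] at h
    rw [hq, seedStep_some] at h
    split_ifs at h with ha hfin hfin <;> cases h
    · rw [ha]
      exact (ih hq).append_one hone hfin
    · exact (ih hq).append_seedNext hone hfin

lemma seedMatches_of_seedStep_eq_none (hs : 1 ≤ s)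
    (h : SeedInvariant one π s u X t) {a : A} (hnone : seedStep one π s (some (X, t)) a = none) :
    seedMatches one π s (u ++ [a]) ((u ++ [a]).length - s + 1) := by
  rw [seedStep_some] at hnone
  split_ifs at hnone with ha hfin hfin
  · rw [ha, ← hfin, ← add_assoc]
    exact seedMatches_append_singleton one π (h.matches_sup_add hone)
      (hone _ (by omega) (by omega))
  · have hmem := Finset.sup_id_mem_of_ne_zero (hfin ▸ Nat.one_le_iff_ne_zero.mp hs)
    rw [hfin] at hmem
    exact (h.matches_of_mem_seedNext hone hmem).2

end SeedInvariant

/-- If reading `w` from the initial state of `S_π` ends in the final state while reading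
its prefix `w₁⋯w_{p-1}` (i.e. `w.dropLast`) ends in a non-final state — the automaton
enters the final state for the first time on the last letter — then `p ≥ s` and `π`
matches `w` at position `p - s + 1`, i.e. `π` matches a suffix of `w`. -/
theorem stmt_16 [DecidableEq A] (one : A) (π : ℕ → Finset A) (s : ℕ)
    (hs : 1 ≤ s) (hone : ∀ i, 1 ≤ i → i ≤ s → one ∈ π i) (w : List A)
    (hfin : seedRead one π s (some (∅, 0)) w = none)
    (hbefore : seedRead one π s (some (∅, 0)) w.dropLast ≠ none) :
    s ≤ w.length ∧ seedMatches one π s w (w.length - s + 1) := by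
  rcases w.eq_nil_or_concat' with rfl | ⟨u, a, rfl⟩
  · simp [seedRead] at hfin
  rw [List.dropLast_concat] at hbefore
  obtain ⟨⟨X, t⟩, hq⟩ := Option.ne_none_iff_exists'.mp hbefore
  rw [seedRead_append_singleton, hq] at hfin
  have hmatch :=
    (SeedInvariant.of_seedRead hone hs hq).seedMatches_of_seedStep_eq_none hone hs hfin
  exact ⟨by have := hmatch.2.1; omega, hmatch⟩
end
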